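/- Let Z be a Banach space with the Daugavet property, B₀ : X × Y → Z a norming bilinear map (i.e., B₀(U_X × U_Y) = U_Z, where U denotes open unit balls), and B : X × Y → Z a norm-one continuous bilinear map. If for every ε > 0 there exist a slice S₀ ∈ S_{B₀} and z in the unit sphere of Z such that B(S₀) ⊆ B_ε(z), then ‖B₀ + B‖ = 1 + ‖B‖ = 2. -/

import Mathlib

/-- A Banach space has the Daugavet property if `‖Id + K‖ = 1 + ‖K‖` for every
rank-one operator `K = z' ⊗ z`. -/
def DaugavetProperty (Z : Type*) [NormedAddCommGroup Z] [NormedSpace ℝ Z] : Prop :=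
  ∀ (z' : Z →L[ℝ] ℝ) (z : Z),
    ‖ContinuousLinearMap.id ℝ Z + z'.smulRight z‖ = 1 + ‖z'.smulRight z‖

variable {X Y Z : Type*} [NormedAddCommGroup X] [NormedSpace ℝ X]
  [NormedAddCommGroup Y] [NormedSpace ℝ Y]
  [NormedAddCommGroup Z] [NormedSpace ℝ Z]

/-- The adjoint bilinear form `⟨B, z'⟩ : (x,y) ↦ ⟨B(x,y), z'⟩`. -/
noncomputable def adjointForm (B : X →L[ℝ] Y →L[ℝ] Z) (z' : Z →L[ℝ] ℝ) :
    X →L[ℝ] Y →L[ℝ] ℝ :=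
  (ContinuousLinearMap.compL ℝ Y Z ℝ z').comp B

/-- The natural set of slices (of `B_X × B_Y`) associated to a bilinear map `B`:
the slices `S(B_{z'}, ε)` of the normalised adjoint forms. -/
noncomputable def bilSlices (B : X →L[ℝ] Y →L[ℝ] Z) : Set (Set (X × Y)) :=
  {S | ∃ (z' : Z →L[ℝ] ℝ) (ε : ℝ), 0 < ε ∧ ε < 1 ∧ adjointForm B z' ≠ 0 ∧
    S = {p | ‖p.1‖ ≤ 1 ∧ ‖p.2‖ ≤ 1 ∧
      (1 - ε) * ‖adjointForm B z'‖ ≤ adjointForm B z' p.1 p.2}}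

/-!
Norming forces `‖B₀‖ ≤ 1`, so `‖B₀ + B‖ ≤ 2`. Conversely, let `B` map the slice `S₀` of `B₀`
given by `z'` into a small ball around the unit vector `z`. The Daugavet property yields `w` in
the slice of `U_Z` given by `z'` with `‖w + z‖` close to `2`; writing `w = B₀ x y` with
`(x, y) ∈ U_X × U_Y` puts `(x, y)` in `S₀`, so `(B₀ + B) x y = (w + z) + (B x y - z)` has norm
close to `2` as well.
-/

theorem ContinuousLinearMap.opNorm_le_of_unit_ball {𝕜 𝕜₂ E F : Type*} [DenselyNormedField 𝕜]
    [NontriviallyNormedField 𝕜₂] [NormedAddCommGroup E] [SeminormedAddCommGroup F]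
    [NormedSpace 𝕜 E] [NormedSpace 𝕜₂ F] {σ : 𝕜 →+* 𝕜₂} [RingHomIsometric σ]
    {f : E →SL[σ] F} {C : ℝ} (hf : ∀ x, ‖x‖ < 1 → ‖f x‖ ≤ C) : ‖f‖ ≤ C :=
  le_of_not_gt fun hC ↦
    let ⟨x, hx, hCx⟩ := f.exists_lt_apply_of_lt_opNorm hC
    (hf x hx).not_gt hCx

theorem norm_le_one_of_image_unitBall_subset {B : X →L[ℝ] Y →L[ℝ] Z}
    (hB : {z : Z | ∃ (x : X) (y : Y), ‖x‖ < 1 ∧ ‖y‖ < 1 ∧ B x y = z} ⊆ Metric.ball 0 1) :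
    ‖B‖ ≤ 1 :=
  ContinuousLinearMap.opNorm_le_of_unit_ball fun x hx ↦
    ContinuousLinearMap.opNorm_le_of_unit_ball fun y hy ↦
      (mem_ball_zero_iff.mp (hB ⟨x, y, hx, hy, rfl⟩)).le

theorem adjointForm_zero (B : X →L[ℝ] Y →L[ℝ] Z) : adjointForm B 0 = 0 := by
  simp [adjointForm]

theorem norm_adjointForm_le (B : X →L[ℝ] Y →L[ℝ] Z) (z' : Z →L[ℝ] ℝ) :
    ‖adjointForm B z'‖ ≤ ‖z'‖ * ‖B‖ :=
  ContinuousLinearMap.opNorm_le_bound₂ _ (by positivity) fun x y ↦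
    calc ‖z' (B x y)‖ ≤ ‖z'‖ * ‖B x y‖ := z'.le_opNorm _
      _ ≤ ‖z'‖ * (‖B‖ * ‖x‖ * ‖y‖) := by gcongr; exact B.le_opNorm₂ x y
      _ = ‖z'‖ * ‖B‖ * ‖x‖ * ‖y‖ := by ring

namespace DaugavetProperty

theorem exists_norm_add_ge {f : Z →L[ℝ] ℝ} (hZ : DaugavetProperty Z) (hf : ‖f‖ = 1) {z : Z}
    (hz : ‖z‖ = 1) {δ : ℝ} (hδ : 0 < δ) :
    ∃ w : Z, ‖w‖ < 1 ∧ 1 - δ ≤ f w ∧ 2 - δ ≤ ‖w + z‖ := by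
  set T := ContinuousLinearMap.id ℝ Z + f.smulRight z
  have hT : ‖T‖ = 2 := by
    rw [hZ, ContinuousLinearMap.norm_smulRight_apply, hf, hz]
    norm_num
  obtain ⟨w₀, hw₀, hTw₀⟩ := T.exists_lt_apply_of_lt_opNorm (r := 2 - δ / 2) (by linarith)
  -- `T (-w₀) = -T w₀`, so we may take `f w ≥ 0`
  obtain ⟨w, hw, hfw, hTw⟩ : ∃ w : Z, ‖w‖ < 1 ∧ 0 ≤ f w ∧ 2 - δ / 2 < ‖T w‖ := by
    rcases le_total 0 (f w₀) with h | h
    · exact ⟨w₀, hw₀, h, hTw₀⟩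
    · exact ⟨-w₀, by rwa [norm_neg], by simpa using h, by rwa [map_neg, norm_neg]⟩
  have hTw_eq : T w = (w + z) - (1 - f w) • z := by
    simp only [T, add_apply, ContinuousLinearMap.id_apply,
      ContinuousLinearMap.smulRight_apply]
    module
  have hfw_lt : f w < 1 :=
    calc f w ≤ ‖f w‖ := Real.le_norm_self _
      _ ≤ ‖f‖ * ‖w‖ := f.le_opNorm w
      _ < 1 := by rwa [hf, one_mul]
  have hTw_le_wz : ‖T w‖ ≤ ‖w + z‖ + (1 - f w) := by
    calc ‖T w‖ ≤ ‖w + z‖ + ‖(1 - f w) • z‖ := hTw_eq ▸ norm_sub_le _ _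
      _ = ‖w + z‖ + (1 - f w) := by
        rw [norm_smul, hz, mul_one, Real.norm_of_nonneg (by linarith)]
  have hTw_le_fw : ‖T w‖ ≤ ‖w‖ + f w := by
    calc ‖T w‖ ≤ ‖w‖ + ‖f w • z‖ := norm_add_le _ _
      _ = ‖w‖ + f w := by rw [norm_smul, hz, mul_one, Real.norm_of_nonneg hfw]
  exact ⟨w, hw, by linarith, by linarith⟩

theorem exists_norm_add_ge_of_ne_zero {f : Z →L[ℝ] ℝ} (hZ : DaugavetProperty Z) (hf : f ≠ 0)
    {z : Z} (hz : ‖z‖ = 1) {δ : ℝ} (hδ : 0 < δ) :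
    ∃ w : Z, ‖w‖ < 1 ∧ (1 - δ) * ‖f‖ ≤ f w ∧ 2 - δ ≤ ‖w + z‖ := by
  have hf₀ : 0 < ‖f‖ := norm_pos_iff.mpr hf
  obtain ⟨w, hw, hfw, hwz⟩ :=
    hZ.exists_norm_add_ge (f := ‖f‖⁻¹ • f) (by simp [norm_smul, hf₀.ne']) hz hδ
  refine ⟨w, hw, ?_, hwz⟩
  rw [smul_apply, smul_eq_mul, le_inv_mul_iff₀ hf₀] at hfw
  linarith

end DaugavetProperty

theorem two_le_norm_add_of_slice_into_ball (hZ : DaugavetProperty Z) {B₀ B : X →L[ℝ] Y →L[ℝ] Z}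
    (hB₀ : ‖B₀‖ ≤ 1)
    (hsurj : Metric.ball (0 : Z) 1 ⊆
      {z : Z | ∃ (x : X) (y : Y), ‖x‖ < 1 ∧ ‖y‖ < 1 ∧ B₀ x y = z})
    (hsl : ∀ ε > (0 : ℝ), ∃ S₀ ∈ bilSlices B₀, ∃ z : Z, ‖z‖ = 1 ∧
      ∀ p ∈ S₀, ‖B p.1 p.2 - z‖ ≤ ε) :
    2 ≤ ‖B₀ + B‖ := by
  refine le_of_forall_pos_le_add fun θ hθ ↦ ?_
  obtain ⟨_, ⟨z', ε, hε, hε₁, hA, rfl⟩, z, hz, hBz⟩ := hsl (θ / 2) (half_pos hθ)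
  have hz' : z' ≠ 0 := by
    rintro rfl
    exact hA (adjointForm_zero B₀)
  set δ := min ε (θ / 2)
  obtain ⟨w, hw, hz'w, hwz⟩ := hZ.exists_norm_add_ge_of_ne_zero hz' hz (lt_min hε (half_pos hθ))
  obtain ⟨x, y, hx, hy, rfl⟩ := hsurj (mem_ball_zero_iff.mpr hw)
  have hslice : (1 - ε) * ‖adjointForm B₀ z'‖ ≤ adjointForm B₀ z' x y :=
    calc (1 - ε) * ‖adjointForm B₀ z'‖ ≤ (1 - ε) * ‖z'‖ := by
          gcongr
          exact (norm_adjointForm_le B₀ z').trans (mul_le_of_le_one_right (norm_nonneg _) hB₀)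
      _ ≤ (1 - δ) * ‖z'‖ := by gcongr; exact min_le_left _ _
      _ ≤ _ := hz'w
  have hBxy : ‖B x y - z‖ ≤ θ / 2 := hBz (x, y) ⟨hx.le, hy.le, hslice⟩
  have hsum : (B₀ + B) x y = (B₀ x y + z) + (B x y - z) := by
    simp only [add_apply]
    abel
  calc 2 ≤ ‖B₀ x y + z‖ - ‖B x y - z‖ + θ := by linarith [min_le_right ε (θ / 2)]
    _ ≤ ‖(B₀ + B) x y‖ + θ := by rw [hsum]; gcongr; exact norm_sub_le_norm_add _ _
    _ ≤ ‖B₀ + B‖ + θ := by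
      gcongr
      exact (((B₀ + B) x).unit_le_opNorm y hy.le).trans ((B₀ + B).unit_le_opNorm x hx.le)

theorem bilinear_daugavet_of_slice_into_ball_general
    (hZ : DaugavetProperty Z)
    (B₀ : X →L[ℝ] Y →L[ℝ] Z)
    (hnorming : {z : Z | ∃ (x : X) (y : Y), ‖x‖ < 1 ∧ ‖y‖ < 1 ∧ B₀ x y = z} =
      Metric.ball (0 : Z) 1)
    (B : X →L[ℝ] Y →L[ℝ] Z) (hB : ‖B‖ = 1)
    (hsl : ∀ ε > (0 : ℝ), ∃ S₀ ∈ bilSlices B₀, ∃ z : Z, ‖z‖ = 1 ∧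
      ∀ p ∈ S₀, ‖B p.1 p.2 - z‖ ≤ ε) :
    ‖B₀ + B‖ = 2 := by
  have hB₀ : ‖B₀‖ ≤ 1 := norm_le_one_of_image_unitBall_subset hnorming.le
  refine le_antisymm ?_ (two_le_norm_add_of_slice_into_ball hZ hB₀ hnorming.ge hsl)
  calc ‖B₀ + B‖ ≤ ‖B₀‖ + ‖B‖ := ContinuousLinearMap.opNorm_add_le _ _
    _ ≤ 2 := by linarith

/-- let `Z` have the Daugavet property, `B₀` a norming bilinear
map and `B` a norm-one bilinear map sending, for each `ε > 0`, some slice of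
`S_{B₀}` into an `ε`-ball around a unit vector.  Then `‖B₀ + B‖ = 1 + ‖B‖ = 2`. -/
theorem bilinear_daugavet_of_slice_into_ball
    [CompleteSpace X] [CompleteSpace Y] [CompleteSpace Z]
    (hZ : DaugavetProperty Z)
    (B₀ : X →L[ℝ] Y →L[ℝ] Z)
    (hnorming : {z : Z | ∃ (x : X) (y : Y), ‖x‖ < 1 ∧ ‖y‖ < 1 ∧ B₀ x y = z} =
      Metric.ball (0 : Z) 1)
    (B : X →L[ℝ] Y →L[ℝ] Z) (hB : ‖B‖ = 1)
    (hsl : ∀ ε > (0 : ℝ), ∃ S₀ ∈ bilSlices B₀, ∃ z : Z, ‖z‖ = 1 ∧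
      ∀ p ∈ S₀, ‖B p.1 p.2 - z‖ ≤ ε) :
    ‖B₀ + B‖ = 2 :=
  bilinear_daugavet_of_slice_into_ball_general hZ B₀ hnorming B hB hsl
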